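/- Let n be a positive integer, let W : Matrix (Fin n) (Fin n) ℝ be symmetric with nonnegative entries, let d i = Σ_j W i j and assume d i > 0 for all i, and let Φ : Matrix (Fin n) (Fin n) ℝ be antisymmetric. Define H i j = (W i j : ℂ) * Complex.exp (Complex.I * Φ i j) and L = I − D^{-1/2} H D^{-1/2} with D = diag(d). Then for every vector x : Fin n → ℂ, the quadratic form satisfies star x ⬝ᵥ (L.mulVec x) = (1/2) · Σ_{i,j} (W i j : ℂ) * ‖x i / √(d i) − exp(i Φ i j) · x j / √(d j)‖² , and in particular star x ⬝ᵥ (L.mulVec x) is a nonnegative real number; hence L is positive semidefinite. -/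

import Mathlib

/-!
Since `D^{-1/2} D D^{-1/2} = 1`, the normalized Laplacian is the congruence
`D^{-1/2} (D - H) D^{-1/2}`, so with `y = D^{-1/2} x` it suffices to treat `D - H`.
With `U i j = e^{iΦ i j}`, which is unimodular and Hermitian because `Φ` is antisymmetric, and
`f i j = W i j (conj (y i) y i - conj (y i) U i j y j)`, expanding the square gives
`W i j ‖y i - U i j y j‖² = f i j + f j i` by the symmetry of `W`. Summing over all pairs counts
`∑ f = star y ⬝ᵥ (D - H) y` twice, so the form is half a nonnegative combination of squared norms.
-/

open Matrix ComplexConjugate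
open scoped ComplexOrder

noncomputable section

lemma star_dotProduct_conjTranspose_mul_mul_mulVec {R m n : Type*} [CommRing R] [StarRing R]
    [Fintype m] [Fintype n] (A : Matrix m n R) (M : Matrix m m R) (x : n → R) :
    star x ⬝ᵥ (Aᴴ * M * A) *ᵥ x = star (A *ᵥ x) ⬝ᵥ M *ᵥ (A *ᵥ x) := by
  simp only [star_mulVec, dotProduct_mulVec, vecMul_vecMul]

section MagneticLaplacian

variable {ι 𝕜 : Type*} [RCLike 𝕜]

lemma ofReal_norm_sub_mul_sq {u : 𝕜} (hu : ‖u‖ = 1) (a b : 𝕜) :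
    ((‖a - u * b‖ ^ 2 : ℝ) : 𝕜) =
      (conj a * a - conj a * (u * b)) + (conj b * b - conj b * (conj u * a)) := by
  have hconj : conj u * u = 1 := by rw [RCLike.conj_mul, hu]; simp
  rw [RCLike.ofReal_pow, ← RCLike.conj_mul, map_sub, map_mul]
  linear_combination (conj b * b) * hconj

def magneticAdjacency (W : Matrix ι ι ℝ) (U : Matrix ι ι 𝕜) : Matrix ι ι 𝕜 :=
  W.map ((↑) : ℝ → 𝕜) ⊙ U

lemma isHermitian_magneticAdjacency {W : Matrix ι ι ℝ} (hW : W.IsSymm) {U : Matrix ι ι 𝕜}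
    (hU : U.IsHermitian) : (magneticAdjacency W U).IsHermitian := by
  refine IsHermitian.hadamard ?_ hU
  ext i j
  simp [hW.apply i j]

variable [Fintype ι] [DecidableEq ι]

def magneticLaplacian (W : Matrix ι ι ℝ) (U : Matrix ι ι 𝕜) : Matrix ι ι 𝕜 :=
  diagonal (fun i => ((∑ j, W i j : ℝ) : 𝕜)) - magneticAdjacency W U

def invSqrtDegree (W : Matrix ι ι ℝ) : Matrix ι ι 𝕜 :=
  diagonal fun i => (((√(∑ j, W i j))⁻¹ : ℝ) : 𝕜)

def normalizedMagneticLaplacian (W : Matrix ι ι ℝ) (U : Matrix ι ι 𝕜) : Matrix ι ι 𝕜 :=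
  1 - invSqrtDegree W * magneticAdjacency W U * invSqrtDegree W

lemma star_dotProduct_magneticLaplacian_mulVec_eq_sum (W : Matrix ι ι ℝ) (U : Matrix ι ι 𝕜)
    (y : ι → 𝕜) :
    star y ⬝ᵥ magneticLaplacian W U *ᵥ y =
      ∑ i, ∑ j, (W i j : 𝕜) * (conj (y i) * y i - conj (y i) * (U i j * y j)) := by
  simp only [magneticLaplacian, sub_mulVec, dotProduct_sub, mul_sub, Finset.sum_sub_distrib]
  congr 1
  · simp only [dotProduct, mulVec_diagonal, Pi.star_apply, RCLike.star_def, RCLike.ofReal_sum,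
      Finset.sum_mul, Finset.mul_sum]
    exact Finset.sum_congr rfl fun i _ => Finset.sum_congr rfl fun j _ => by ring
  · simp only [magneticAdjacency, dotProduct, mulVec, hadamard_apply, map_apply, Pi.star_apply,
      RCLike.star_def, Finset.mul_sum]
    exact Finset.sum_congr rfl fun i _ => Finset.sum_congr rfl fun j _ => by ring

theorem star_dotProduct_magneticLaplacian_mulVec {W : Matrix ι ι ℝ} (hW : W.IsSymm)
    {U : Matrix ι ι 𝕜} (hU : U.IsHermitian) (hU1 : ∀ i j, ‖U i j‖ = 1) (y : ι → 𝕜) :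
    star y ⬝ᵥ magneticLaplacian W U *ᵥ y =
      ((2⁻¹ * ∑ i, ∑ j, W i j * ‖y i - U i j * y j‖ ^ 2 : ℝ) : 𝕜) := by
  set f : ι → ι → 𝕜 := fun i j => (W i j : 𝕜) * (conj (y i) * y i - conj (y i) * (U i j * y j))
  have hterm : ∀ i j, ((W i j * ‖y i - U i j * y j‖ ^ 2 : ℝ) : 𝕜) = f i j + f j i := by
    intro i j
    have hUji : conj (U i j) = U j i := hU.apply j i
    rw [RCLike.ofReal_mul, ofReal_norm_sub_mul_sq (hU1 i j), hUji]
    simp only [f, hW.apply i j]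
    ring
  rw [star_dotProduct_magneticLaplacian_mulVec_eq_sum, RCLike.ofReal_mul, RCLike.ofReal_sum]
  simp only [RCLike.ofReal_sum, hterm, Finset.sum_add_distrib]
  rw [Finset.sum_comm (f := fun i j => f j i)]
  push_cast
  ring

theorem posSemidef_magneticLaplacian {W : Matrix ι ι ℝ} (hW : W.IsSymm) (hW0 : ∀ i j, 0 ≤ W i j)
    {U : Matrix ι ι 𝕜} (hU : U.IsHermitian) (hU1 : ∀ i j, ‖U i j‖ = 1) :
    (magneticLaplacian W U).PosSemidef := by
  refine .of_dotProduct_mulVec_nonneg ?_ fun y => ?_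
  · exact (isHermitian_diagonal_of_self_adjoint _ (by ext; simp)).sub
      (isHermitian_magneticAdjacency hW hU)
  · rw [star_dotProduct_magneticLaplacian_mulVec hW hU hU1, RCLike.ofReal_nonneg]
    exact mul_nonneg (by norm_num) <| Finset.sum_nonneg fun i _ => Finset.sum_nonneg fun j _ =>
      mul_nonneg (hW0 i j) (sq_nonneg _)

lemma conjTranspose_invSqrtDegree (W : Matrix ι ι ℝ) :
    (invSqrtDegree W : Matrix ι ι 𝕜)ᴴ = invSqrtDegree W := by
  simp [invSqrtDegree]

theorem normalizedMagneticLaplacian_eq_invSqrtDegree_mul {W : Matrix ι ι ℝ}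
    (hd : ∀ i, 0 < ∑ j, W i j) (U : Matrix ι ι 𝕜) :
    normalizedMagneticLaplacian W U =
      invSqrtDegree W * magneticLaplacian W U * invSqrtDegree W := by
  have hD :
      invSqrtDegree W * diagonal (fun i => ((∑ j, W i j : ℝ) : 𝕜)) * invSqrtDegree W = 1 := by
    simp only [invSqrtDegree, diagonal_mul_diagonal, ← diagonal_one]
    congr 1
    ext i
    rw [← RCLike.ofReal_mul, ← RCLike.ofReal_mul, mul_right_comm, ← mul_inv,
      Real.mul_self_sqrt (hd i).le, inv_mul_cancel₀ (hd i).ne', RCLike.ofReal_one]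
  rw [normalizedMagneticLaplacian, magneticLaplacian, mul_sub, sub_mul, hD]

theorem star_dotProduct_normalizedMagneticLaplacian_mulVec {W : Matrix ι ι ℝ} (hW : W.IsSymm)
    (hd : ∀ i, 0 < ∑ j, W i j) {U : Matrix ι ι 𝕜} (hU : U.IsHermitian) (hU1 : ∀ i j, ‖U i j‖ = 1)
    (x : ι → 𝕜) :
    star x ⬝ᵥ normalizedMagneticLaplacian W U *ᵥ x =
      ((2⁻¹ * ∑ i, ∑ j, W i j *
        ‖x i / (√(∑ k, W i k) : 𝕜) - U i j * (x j / (√(∑ k, W j k) : 𝕜))‖ ^ 2 : ℝ) : 𝕜) := by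
  have hy : invSqrtDegree W *ᵥ x = fun i => x i / (√(∑ k, W i k) : 𝕜) := by
    ext i
    simp [invSqrtDegree, mulVec_diagonal, div_eq_inv_mul]
  nth_rw 1 [normalizedMagneticLaplacian_eq_invSqrtDegree_mul hd, ← conjTranspose_invSqrtDegree]
  rw [star_dotProduct_conjTranspose_mul_mul_mulVec, hy,
    star_dotProduct_magneticLaplacian_mulVec hW hU hU1]

theorem posSemidef_normalizedMagneticLaplacian {W : Matrix ι ι ℝ} (hW : W.IsSymm)
    (hW0 : ∀ i j, 0 ≤ W i j) (hd : ∀ i, 0 < ∑ j, W i j) {U : Matrix ι ι 𝕜}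
    (hU : U.IsHermitian) (hU1 : ∀ i j, ‖U i j‖ = 1) :
    (normalizedMagneticLaplacian W U).PosSemidef := by
  nth_rw 1 [normalizedMagneticLaplacian_eq_invSqrtDegree_mul hd, ← conjTranspose_invSqrtDegree]
  exact (posSemidef_magneticLaplacian hW hW0 hU hU1).conjTranspose_mul_mul_same _

end MagneticLaplacian

section MagneticPhase

variable {ι : Type*}

def magneticPhase (Φ : Matrix ι ι ℝ) : Matrix ι ι ℂ :=
  of fun i j => Complex.exp (Complex.I * Φ i j)

lemma isHermitian_magneticPhase {Φ : Matrix ι ι ℝ} (hΦ : ∀ i j, Φ j i = -Φ i j) :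
    (magneticPhase Φ).IsHermitian := by
  ext i j
  simp only [conjTranspose_apply, magneticPhase, of_apply, Complex.star_def, ← Complex.exp_conj,
    map_mul, Complex.conj_I, Complex.conj_ofReal, hΦ j i]
  push_cast
  ring_nf

lemma norm_magneticPhase_apply (Φ : Matrix ι ι ℝ) (i j : ι) : ‖magneticPhase Φ i j‖ = 1 :=
  Complex.norm_exp_I_mul_ofReal _

end MagneticPhase

end

theorem magnetic_laplacian_quadratic_form_psd_general
    (n : ℕ)
    (W : Matrix (Fin n) (Fin n) ℝ)
    (hWsymm : ∀ i j, W i j = W j i) (hWnonneg : ∀ i j, 0 ≤ W i j)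
    (d : Fin n → ℝ) (hd : ∀ i, d i = ∑ j, W i j) (hdpos : ∀ i, 0 < d i)
    (Φ : Matrix (Fin n) (Fin n) ℝ) (hΦ : ∀ i j, Φ j i = - Φ i j)
    (H : Matrix (Fin n) (Fin n) ℂ)
    (hH : ∀ i j, H i j = (W i j : ℂ) * Complex.exp (Complex.I * (Φ i j : ℂ)))
    (Dhalf : Matrix (Fin n) (Fin n) ℂ)
    (hD : Dhalf = Matrix.diagonal (fun i => (((Real.sqrt (d i))⁻¹ : ℝ) : ℂ)))
    (L : Matrix (Fin n) (Fin n) ℂ)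
    (hL : L = 1 - Dhalf * H * Dhalf) :
    (∀ x : Fin n → ℂ,
      star x ⬝ᵥ L.mulVec x
        = (1 / 2 : ℂ) * ∑ i, ∑ j, (W i j : ℂ) *
            ((‖x i / (Real.sqrt (d i) : ℂ)
                - Complex.exp (Complex.I * (Φ i j : ℂ)) * (x j / (Real.sqrt (d j) : ℂ))‖ ^ 2 : ℝ) : ℂ)
      ∧ 0 ≤ (star x ⬝ᵥ L.mulVec x).re ∧ (star x ⬝ᵥ L.mulVec x).im = 0)
    ∧ L.PosSemidef := by
  obtain rfl : d = fun i => ∑ j, W i j := funext hd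
  have hW : W.IsSymm := IsSymm.ext fun i j => hWsymm j i
  have hU := isHermitian_magneticPhase hΦ
  have hU1 := norm_magneticPhase_apply Φ
  obtain rfl : L = normalizedMagneticLaplacian W (magneticPhase Φ) := by
    rw [hL, hD, show H = magneticAdjacency W (magneticPhase Φ) from ext fun i j => hH i j]
    rfl
  have hpsd := posSemidef_normalizedMagneticLaplacian hW hWnonneg hdpos hU hU1
  refine ⟨fun x => ⟨?_, RCLike.nonneg_iff.mp (hpsd.dotProduct_mulVec_nonneg x)⟩, hpsd⟩
  rw [star_dotProduct_normalizedMagneticLaplacian_mulVec hW hdpos hU hU1 x,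
    RCLike.ofReal_eq_complex_ofReal]
  push_cast
  simp only [magneticPhase, of_apply]
  ring

theorem magnetic_laplacian_quadratic_form_psd
    (n : ℕ) (hn : 0 < n)
    (W : Matrix (Fin n) (Fin n) ℝ)
    (hWsymm : ∀ i j, W i j = W j i) (hWnonneg : ∀ i j, 0 ≤ W i j)
    (d : Fin n → ℝ) (hd : ∀ i, d i = ∑ j, W i j) (hdpos : ∀ i, 0 < d i)
    (Φ : Matrix (Fin n) (Fin n) ℝ) (hΦ : ∀ i j, Φ j i = - Φ i j)
    (H : Matrix (Fin n) (Fin n) ℂ)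
    (hH : ∀ i j, H i j = (W i j : ℂ) * Complex.exp (Complex.I * (Φ i j : ℂ)))
    (Dhalf : Matrix (Fin n) (Fin n) ℂ)
    (hD : Dhalf = Matrix.diagonal (fun i => (((Real.sqrt (d i))⁻¹ : ℝ) : ℂ)))
    (L : Matrix (Fin n) (Fin n) ℂ)
    (hL : L = 1 - Dhalf * H * Dhalf) :
    (∀ x : Fin n → ℂ,
      star x ⬝ᵥ L.mulVec x
        = (1 / 2 : ℂ) * ∑ i, ∑ j, (W i j : ℂ) *
            ((‖x i / (Real.sqrt (d i) : ℂ)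
                - Complex.exp (Complex.I * (Φ i j : ℂ)) * (x j / (Real.sqrt (d j) : ℂ))‖ ^ 2 : ℝ) : ℂ)
      ∧ 0 ≤ (star x ⬝ᵥ L.mulVec x).re ∧ (star x ⬝ᵥ L.mulVec x).im = 0)
    ∧ L.PosSemidef :=
  magnetic_laplacian_quadratic_form_psd_general n W hWsymm hWnonneg d hd hdpos Φ hΦ H hH Dhalf hD L
    hL
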